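/- arXiv:2210.02965 — 2 statements merged into one kernel-verified Lean document; each statement's English description precedes it below -/
import Mathlib

section
/- Let W be a real vector space, B̃ : W × W → ℝ a bilinear form, and f, J : W → ℝ linear functionals. Let X ⊆ W and X_k ⊆ W be linear subspaces (not necessarily nested: X_k ⊄ X is allowed), and let X + X_k denote their sum. Suppose U ∈ X satisfies B̃(U, Φ) = f(Φ) for all Φ ∈ X + X_k (the continuous problem posed on the larger space), U_k ∈ X_k satisfies B̃(U_k, Φ) = f(Φ) for all Φ ∈ X_k, Z ∈ X + X_k satisfies B̃(δ, Z) = J(δ) for all δ ∈ X + X_k (the continuous adjoint problem), and Z_k ∈ X_k satisfies B̃(δ, Z_k) = J(δ) for all δ ∈ X_k (the time-discrete adjoint problem). Then the temporal goal-oriented error identity holds: J(U) − J(U_k) = f(Z − Z_k) − B̃(U_k, Z − Z_k), i.e. J(U) − J(U_k) = −Ã(U_k)(Z − Z_k) where Ã(U)(Φ) := B̃(U, Φ) − f(Φ). -/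
/-- Abstract nonconforming Galerkin setting for the temporal DWR error
representation: the dG(r) time-discrete space `X_k` need not be contained in
the continuous space `X`, so the continuous problem (with the jump-augmented
form `B̃`) is posed on the sum `X + X_k`. Then
`J(U) − J(U_k) = f(Z − Z_k) − B̃(U_k, Z − Z_k) = −Ã(U_k)(Z − Z_k)`,
where `Ã(U)(Φ) := B̃(U, Φ) − f(Φ)`. -/
theorem dwr_temporal_error_identity
    (W : Type*) [AddCommGroup W] [Module ℝ W]
    (Bt : W →ₗ[ℝ] W →ₗ[ℝ] ℝ) (f J : W →ₗ[ℝ] ℝ)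
    (X Xk : Submodule ℝ W)
    (U Uk Z Zk : W)
    (hU : U ∈ X) (hUk : Uk ∈ Xk) (hZ : Z ∈ X ⊔ Xk) (hZk : Zk ∈ Xk)
    (hPrimal : ∀ Φ ∈ X ⊔ Xk, Bt U Φ = f Φ)
    (hPrimalK : ∀ Φ ∈ Xk, Bt Uk Φ = f Φ)
    (hAdj : ∀ δ ∈ X ⊔ Xk, Bt δ Z = J δ)
    (hAdjK : ∀ δ ∈ Xk, Bt δ Zk = J δ) :
    J U - J Uk = f (Z - Zk) - Bt Uk (Z - Zk) := by
  have hU' : U ∈ X ⊔ Xk := Submodule.mem_sup_left hU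
  have hUk' : Uk ∈ X ⊔ Xk := Submodule.mem_sup_right hUk
  have h1 : J U = Bt U Z := (hAdj U hU').symm
  have h2 : J Uk = Bt Uk Zk := (hAdjK Uk hUk).symm
  have h3 : Bt Uk Z = J Uk := hAdj Uk hUk'
  have h4 : f Z = Bt U Z := (hPrimal Z hZ).symm
  have h5 : Bt Uk Zk = f Zk := hPrimalK Zk hZk
  simp only [map_sub]
  rw [h1, h2, ← h4, h4, h3, h2, ← h5]
  ring
end

section
/- Let W be a real vector space, B : W × W → ℝ a bilinear form, and f, J : W → ℝ linear functionals; set A(U)(Φ) := B(U, Φ) − f(Φ). Let X ⊆ W, X_k ⊆ W and X_kh ⊆ X_k be linear subspaces. Suppose U ∈ X satisfies B(U, Φ) = f(Φ) for all Φ ∈ X + X_k, U_k ∈ X_k satisfies B(U_k, Φ) = f(Φ) for all Φ ∈ X_k, and U_kh ∈ X_kh satisfies B(U_kh, Φ) = f(Φ) for all Φ ∈ X_kh; suppose further Z ∈ X + X_k satisfies B(δ, Z) = J(δ) for all δ ∈ X + X_k, Z_k ∈ X_k satisfies B(δ, Z_k) = J(δ) for all δ ∈ X_k, and Z_kh ∈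 X_kh satisfies B(δ, Z_kh) = J(δ) for all δ ∈ X_kh. Then the total discretization error in the goal functional splits exactly into a temporal and a spatial contribution: J(U) − J(U_kh) = η_k + η_h, where η_k := −A(U_k)(Z − Z_k) = f(Z − Z_k) − B(U_k, Z − Z_k) and η_h := −A(U_kh)(Z_k − Z_kh) = f(Z_k − Z_kh) − B(U_kh, Z_k − Z_kh). In particular, for a linear problem and linear goal functional the combined DWR error estimator η = η_k + η_h is exact, so the effectivity index η / (J(U) − J(U_kh)) equals 1 whenever J(U) ≠ J(U_kh). -/
/-- Abstract space–time DWR setting for a linear PDE with a linear goal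
functional: the total discretization error splits exactly into a temporal and
a spatial contribution, `J(U) − J(U_kh) = η_k + η_h`, with
`η_k := −A(U_k)(Z − Z_k) = f(Z − Z_k) − B(U_k, Z − Z_k)` and
`η_h := −A(U_kh)(Z_k − Z_kh) = f(Z_k − Z_kh) − B(U_kh, Z_k − Z_kh)`.
In particular the combined DWR estimator `η = η_k + η_h` is exact, so the
effectivity index `η / (J(U) − J(U_kh))` equals `1` whenever `J(U) ≠ J(U_kh)`. -/
theorem dwr_error_splitting_exact
    (W : Type*) [AddCommGroup W] [Module ℝ W]
    (B : W →ₗ[ℝ] W →ₗ[ℝ] ℝ) (f J : W →ₗ[ℝ] ℝ)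
    (X Xk Xkh : Submodule ℝ W) (hsub : Xkh ≤ Xk)
    (U Uk Ukh Z Zk Zkh : W)
    (hU : U ∈ X) (hUk : Uk ∈ Xk) (hUkh : Ukh ∈ Xkh)
    (hZ : Z ∈ X ⊔ Xk) (hZk : Zk ∈ Xk) (hZkh : Zkh ∈ Xkh)
    (hPrimal : ∀ Φ ∈ X ⊔ Xk, B U Φ = f Φ)
    (hPrimalK : ∀ Φ ∈ Xk, B Uk Φ = f Φ)
    (hPrimalKH : ∀ Φ ∈ Xkh, B Ukh Φ = f Φ)
    (hAdj : ∀ δ ∈ X ⊔ Xk, B δ Z = J δ)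
    (hAdjK : ∀ δ ∈ Xk, B δ Zk = J δ)
    (hAdjKH : ∀ δ ∈ Xkh, B δ Zkh = J δ) :
    J U - J Ukh =
      (f (Z - Zk) - B Uk (Z - Zk)) + (f (Zk - Zkh) - B Ukh (Zk - Zkh)) ∧
    (J U ≠ J Ukh →
      ((f (Z - Zk) - B Uk (Z - Zk)) + (f (Zk - Zkh) - B Ukh (Zk - Zkh))) /
        (J U - J Ukh) = 1) := by
  have hUX : U ∈ X ⊔ Xk := Submodule.mem_sup_left hU
  have hUkX : Uk ∈ X ⊔ Xk := Submodule.mem_sup_right hUk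
  have h1 : B U Z = J U := hAdj U hUX
  have h2 : B Uk Z = J Uk := hAdj Uk hUkX
  have h3 : f Z = B U Z := (hPrimal Z hZ).symm
  have h4 : B Uk Zk = f Zk := hPrimalK Zk hZk
  have h5 : B Uk Zk = J Uk := hAdjK Uk hUk
  have h6 : B Ukh Zk = J Ukh := hAdjK Ukh (hsub hUkh)
  have h7 : B Ukh Zkh = f Zkh := hPrimalKH Zkh hZkh
  have e1 : f (Z - Zk) = f Z - f Zk := map_sub f Z Zk
  have e2 : f (Zk - Zkh) = f Zk - f Zkh := map_sub f Zk Zkh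
  have e3 : B Uk (Z - Zk) = B Uk Z - B Uk Zk := map_sub (B Uk) Z Zk
  have e4 : B Ukh (Zk - Zkh) = B Ukh Zk - B Ukh Zkh := map_sub (B Ukh) Zk Zkh
  have key : J U - J Ukh =
      (f (Z - Zk) - B Uk (Z - Zk)) + (f (Zk - Zkh) - B Ukh (Zk - Zkh)) := by
    rw [e1, e2, e3, e4]; linarith
  exact ⟨key, fun hne => by rw [← key]; exact div_self (sub_ne_zero.mpr hne)⟩
end
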